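/- arXiv:1211.5745 — 2 statements merged into one kernel-verified Lean document; each statement's English description precedes it below -/
import Mathlib

section
/- For all natural numbers m and n: if m < n then H_{m,n}(0) = 0, and if m ≥ n then H_{m,n}(0) = (−1)^n · (m!/(m−n)!) · H_{m−n}(0), where H_j = H_{j,0} denotes the physicists' Hermite polynomial. -/
open Polynomial Finset

/-- The operator `A p = 2·X·p − p′`. -/
noncomputable def A (p : ℝ[X]) : ℝ[X] := 2 * X * p - derivative p

/-- The two-index Hermite polynomial `H_{m,n} = A^m (X^n)`. -/
noncomputable def H (m n : ℕ) : ℝ[X] := A^[m] (X ^ n)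

lemma A_sub (p q : ℝ[X]) : A (p - q) = A p - A q := by
  simp [A]; ring

lemma A_C_mul (c : ℝ) (p : ℝ[X]) : A (C c * p) = C c * A p := by
  simp [A]; ring

lemma A_X_mul (q : ℝ[X]) : A (X * q) = X * A q - q := by
  simp [A]; ring

lemma A_iter_X_mul (m : ℕ) (q : ℝ[X]) :
    A^[m+1] (X * q) = X * A^[m+1] q - C ((m:ℝ)+1) * A^[m] q := by
  induction m generalizing q with
  | zero => simpa using A_X_mul q
  | succ k ih =>
      rw [Function.iterate_succ_apply' A (k+1) (X * q), ih, A_sub, A_X_mul, A_C_mul,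
        ← Function.iterate_succ_apply' A (k+1), ← Function.iterate_succ_apply' A k]
      generalize A^[k+1+1] q = a
      generalize A^[k+1] q = b
      simp only [Nat.cast_add, Nat.cast_one, map_add, map_one]
      ring

lemma key (m n : ℕ) : (H (m+1) (n+1)).eval 0 = -((m:ℝ)+1) * (H m n).eval 0 := by
  have h : (X:ℝ[X]) ^ (n+1) = X * X ^ n := by ring
  simp [H, h, A_iter_X_mul m (X ^ n)]
  ring

theorem hmn_at_zero (m n : ℕ) :
    (m < n → (H m n).eval 0 = 0) ∧
    (n ≤ m → (H m n).eval 0 =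
      (-1 : ℝ) ^ n * ((m.factorial : ℝ) / ((m - n).factorial : ℝ)) *
        (H (m - n) 0).eval 0) := by
  induction n generalizing m with
  | zero =>
      refine ⟨fun h => absurd h (by omega), fun _ => ?_⟩
      simp [div_self (by positivity : (m.factorial : ℝ) ≠ 0)]
  | succ n ih =>
      cases m with
      | zero =>
          refine ⟨fun _ => ?_, fun h => absurd h (by omega)⟩
          simp [H]
      | succ m =>
          constructor
          · intro hlt
            rw [key m n, (ih m).1 (by omega)]
            ring
          · intro hle
            have hle' : n ≤ m := by omega
            rw [key m n, (ih m).2 hle']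
            have hsub : m + 1 - (n + 1) = m - n := by omega
            rw [hsub, Nat.factorial_succ]
            have hne : ((m - n).factorial : ℝ) ≠ 0 := by positivity
            push_cast
            field_simp
            ring
end

section
/- (Nielsen identity for two-index Hermite polynomials) For all natural numbers m, r, n with n ≥ 1 and ν ≤ min(r, n) in the inner range, and for all real x ≠ 0, H_{m+r,n}(x) = m!·r!·n·n! · Σ_{k=0}^{m} Σ_{ν=0}^{k} Σ_{j=0}^{ν} α_{j,ν} · ((n+k−ν−1)! / ((k−ν)!·ν!)) · ((−x)^ν / x^{n+k}) · (H_{m−k,n}(x) / ((m−k)!·n!)) · (H_{r−ν+j,n−j}(x) / ((r−ν+j)!·(n−j)!)), where the inner sums are understood with the convention that terms with ν > r or j > n vanish (H_{a,b} = 0 when an index is negative). -/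
open Polynomial Finset

/-- Two-index Hermite polynomials with integer indices, with the convention
that `Hz a b = 0` whenever one of the indices is negative. -/
noncomputable def Hz (a b : ℤ) : ℝ[X] :=
  if a < 0 ∨ b < 0 then 0 else A^[a.toNat] (X ^ b.toNat)

/-- The coefficients `α_{j,ν}`: `α_{0,ν} = 2^ν`, `α_{ν,ν} = 1`, and
`α_{j,ν} = 2·α_{j,ν−1} + α_{j−1,ν−1}` for `1 ≤ j < ν`. -/
def alpha : ℕ → ℕ → ℕ
  | 0, ν => 2 ^ ν
  | _ + 1, 0 => 1
  | j + 1, ν + 1 =>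
      if j + 1 = ν + 1 then 1 else 2 * alpha (j + 1) ν + alpha j ν

/-!
Since `A = e^{x²} ∘ (-D) ∘ e^{-x²}`, the operator `A` satisfies the Leibniz rule
`A^m (u v) = ∑ₖ C(m,k) A^{m-k} u · (-D)^k v`. Applied to `H_{r,n} = xⁿ · (x⁻ⁿ H_{r,n})`
it gives `H_{m+r,n} = ∑ₖ C(m,k) H_{m-k,n} · (-D)^k (x⁻ⁿ H_{r,n})`. The Leibniz rule for `D`
expands the last factor into the derivatives `D^ν H_{r,n}`, and
`D H_{m,n} = 2m H_{m-1,n} + n H_{m,n-1}` makes `D^ν H_{r,n}` a binomial sum of the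
`H_{r-ν+j,n-j}`. Each of the three expansions is the same Pascal-triangle recursion.
Multiplying through by `x^{n+m}` keeps everything polynomial; the factorials of the statement
are what the binomial, ascending and descending factorial coefficients become.
-/

open Nat

theorem eq_sum_choose_of_step {M : Type*} [AddCommMonoid M] (T : ℕ → M →+ M)
    (f : ℕ → ℕ → M) (hf : ∀ i j, T (i + j) (f i j) = f (i + 1) j + f i (j + 1))
    (Φ : ℕ → M) (h0 : Φ 0 = f 0 0) (hΦ : ∀ m, Φ (m + 1) = T m (Φ m)) (m : ℕ) :
    Φ m = ∑ k ∈ range (m + 1), m.choose k • f k (m - k) := by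
  induction m with
  | zero => simp [h0]
  | succ m ih =>
    rw [hΦ, ih, map_sum, sum_choose_succ_nsmul, ← sum_add_distrib]
    refine sum_congr rfl fun k hk => ?_
    obtain ⟨j, rfl⟩ := Nat.exists_eq_add_of_le (Nat.lt_succ_iff.mp (mem_range.mp hk))
    rw [Nat.add_sub_cancel_left, show k + j + 1 - k = j + 1 by omega, map_nsmul, hf,
      smul_add, add_comm]

theorem X_mul_derivative_X_pow (i : ℕ) :
    X * derivative (X ^ i : ℝ[X]) = (i : ℝ[X]) * X ^ i := by
  cases i with
  | zero => simp
  | succ i => rw [derivative_X_pow, C_eq_natCast]; push_cast; ring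

theorem A_add (p q : ℝ[X]) : A (p + q) = A p + A q := by
  simp only [A, derivative_add]; ring

theorem A_natCast_mul (c : ℕ) (p : ℝ[X]) : A (c * p) = c * A p := by
  simp only [A, derivative_natCast_mul]; ring

theorem derivative_A (p : ℝ[X]) : derivative (A p) = 2 * p + A (derivative p) := by
  simp only [A, derivative_sub, derivative_mul, derivative_X, derivative_ofNat]; ring

theorem H_succ (m n : ℕ) : H (m + 1) n = A (H m n) :=
  Function.iterate_succ_apply' A m _

theorem H_add (m r n : ℕ) : H (m + r) n = A^[m] (H r n) :=
  Function.iterate_add_apply A m r _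

theorem derivative_H (m n : ℕ) :
    derivative (H m n) = ((2 * m : ℕ) : ℝ[X]) * H (m - 1) n + (n : ℝ[X]) * H m (n - 1) := by
  induction m with
  | zero => simp [H, derivative_X_pow]
  | succ m ih =>
    have hA : ((2 * m : ℕ) : ℝ[X]) * A (H (m - 1) n) = ((2 * m : ℕ) : ℝ[X]) * H m n := by
      cases m with
      | zero => simp
      | succ m => rw [← H_succ, Nat.add_sub_cancel]
    rw [H_succ, derivative_A, ih, A_add, A_natCast_mul, A_natCast_mul, hA, ← H_succ,
      Nat.add_sub_cancel]
    push_cast; ring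

theorem iterate_derivative_H (r n ν : ℕ) :
    derivative^[ν] (H r n) = ∑ j ∈ range (ν + 1), ν.choose j •
      (((2 ^ (ν - j) * r.descFactorial (ν - j) * n.descFactorial j : ℕ) : ℝ[X]) *
        H (r - (ν - j)) (n - j)) := by
  refine eq_sum_choose_of_step (fun _ => derivative.toAddMonoidHom)
    (fun j i => ((2 ^ i * r.descFactorial i * n.descFactorial j : ℕ) : ℝ[X]) *
      H (r - i) (n - j))
    (fun j i => ?_) (fun ν => derivative^[ν] (H r n)) (by simp) (fun ν => ?_) ν
  · simp only [LinearMap.toAddMonoidHom_coe, derivative_natCast_mul, derivative_H,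
      Nat.descFactorial_succ, Nat.sub_sub]
    push_cast; ring
  · exact Function.iterate_succ_apply' _ _ _

/-- `twistedDeriv n f k = (-1)^k X^(n+k) D^k (X^(-n) f)`, by a recursion free of negative
powers. -/
noncomputable def twistedDeriv (n : ℕ) (f : ℝ[X]) : ℕ → ℝ[X]
  | 0 => f
  | k + 1 => ((n + k : ℕ) : ℝ[X]) * twistedDeriv n f k - X * derivative (twistedDeriv n f k)

theorem twistedDeriv_eq_sum (n : ℕ) (f : ℝ[X]) (k : ℕ) :
    twistedDeriv n f k = ∑ ν ∈ range (k + 1), k.choose ν •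
      ((-1) ^ ν * (n.ascFactorial (k - ν) : ℝ[X]) * X ^ ν * derivative^[ν] f) := by
  refine eq_sum_choose_of_step
    (fun k => AddMonoidHom.mk' (fun p => ((n + k : ℕ) : ℝ[X]) * p - X * derivative p)
      fun p q => by simp only [derivative_add]; ring)
    (fun ν i => (-1) ^ ν * (n.ascFactorial i : ℝ[X]) * X ^ ν * derivative^[ν] f)
    (fun ν i => ?_) (twistedDeriv n f) (by simp [twistedDeriv]) (fun k => rfl) k
  have hsign : derivative ((-1 : ℝ[X]) ^ ν) = 0 := by simp [derivative_pow]
  simp only [AddMonoidHom.mk'_apply, Function.iterate_succ_apply', derivative_mul, hsign,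
    derivative_natCast, Nat.ascFactorial_succ]
  push_cast
  linear_combination (-(-1) ^ ν * (n.ascFactorial i : ℝ[X]) * derivative^[ν] f) *
    X_mul_derivative_X_pow ν

theorem X_pow_mul_iterate_A (n m : ℕ) (f : ℝ[X]) :
    X ^ (n + m) * A^[m] f =
      ∑ k ∈ range (m + 1), m.choose k • (X ^ (m - k) * H (m - k) n * twistedDeriv n f k) := by
  -- `X^(N+1) * A p = (2X² + N) (X^N p) - X (X^N p)'`
  refine eq_sum_choose_of_step
    (fun m => AddMonoidHom.mk'
      (fun p => (2 * X ^ 2 + ((n + m : ℕ) : ℝ[X])) * p - X * derivative p)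
      fun p q => by simp only [derivative_add]; ring)
    (fun k i => X ^ i * H i n * twistedDeriv n f k) (fun k i => ?_)
    (fun m => X ^ (n + m) * A^[m] f) (by simp [H, twistedDeriv]) (fun m => ?_) m
  · simp only [AddMonoidHom.mk'_apply, H_succ, A, twistedDeriv, derivative_mul]
    push_cast
    linear_combination (-H i n * twistedDeriv n f k) * X_mul_derivative_X_pow i
  · simp only [AddMonoidHom.mk'_apply, Function.iterate_succ_apply', A, derivative_mul]
    have hX := X_mul_derivative_X_pow (n + m)
    push_cast at hX ⊢
    linear_combination A^[m] f * hX

theorem alpha_eq_two_pow_mul_choose {j ν : ℕ} (h : j ≤ ν) :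
    alpha j ν = 2 ^ (ν - j) * ν.choose j := by
  induction ν generalizing j with
  | zero =>
    obtain rfl : j = 0 := Nat.le_zero.mp h
    simp [alpha]
  | succ ν ih =>
    cases j with
    | zero => simp [alpha]
    | succ j =>
      rw [alpha]
      split_ifs with hjν
      · simp [hjν]
      · rw [ih (by omega), ih (by omega), Nat.choose_succ_succ, Nat.add_sub_add_right,
          show ν - j = ν - (j + 1) + 1 by omega, pow_succ]
        ring

-- Outside the range `i ≤ r`, `j ≤ n` both sides vanish: `Hz` by convention, the right side
-- through its descending factorial.
theorem eval_Hz_div_factorial (r n i j : ℕ) (x : ℝ) :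
    (Hz ((r : ℤ) - i) ((n : ℤ) - j)).eval x /
        ((((r : ℤ) - i).toNat ! : ℝ) * (((n : ℤ) - j).toNat ! : ℝ)) =
      r.descFactorial i * n.descFactorial j * (H (r - i) (n - j)).eval x / (r ! * n !) := by
  by_cases hij : i ≤ r ∧ j ≤ n
  · have hr := Nat.factorial_mul_descFactorial hij.1
    have hn := Nat.factorial_mul_descFactorial hij.2
    have hr0 : (r.descFactorial i : ℝ) ≠ 0 := by
      exact_mod_cast Nat.descFactorial_eq_zero_iff_lt.not.mpr (not_lt.mpr hij.1)
    have hn0 : (n.descFactorial j : ℝ) ≠ 0 := by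
      exact_mod_cast Nat.descFactorial_eq_zero_iff_lt.not.mpr (not_lt.mpr hij.2)
    rw [Hz, if_neg (by omega), show ((r : ℤ) - i).toNat = r - i by omega,
      show ((n : ℤ) - j).toNat = n - j by omega, ← hr, ← hn, H]
    push_cast
    field_simp
  · rw [Hz, if_pos (by omega)]
    rcases not_and_or.mp hij with h | h <;>
      simp [Nat.descFactorial_eq_zero_iff_lt.mpr (not_le.mp h)]

theorem cast_factorial_add_sub_one {n : ℕ} (hn : 1 ≤ n) (t : ℕ) :
    ((n + t - 1)! : ℝ) = n.ascFactorial t * n ! / n := by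
  have hasc := Nat.factorial_mul_ascFactorial' n t hn
  have hfac := Nat.mul_factorial_pred (n := n) (by omega)
  rw [eq_div_iff (by positivity), ← hasc, ← hfac]
  push_cast
  ring

theorem hmn_nielsen (m r n : ℕ) (hn : 1 ≤ n) (x : ℝ) (hx : x ≠ 0) :
    (H (m + r) n).eval x =
      (m.factorial : ℝ) * (r.factorial : ℝ) * (n : ℝ) * (n.factorial : ℝ) *
        ∑ k ∈ range (m + 1), ∑ ν ∈ range (k + 1), ∑ j ∈ range (ν + 1),
          (alpha j ν : ℝ) *
            (((n + k - ν - 1).factorial : ℝ) /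
              (((k - ν).factorial : ℝ) * (ν.factorial : ℝ))) *
            ((-x) ^ ν / x ^ (n + k)) *
            ((H (m - k) n).eval x / (((m - k).factorial : ℝ) * (n.factorial : ℝ))) *
            ((Hz ((r : ℤ) - ν + j) ((n : ℤ) - j)).eval x /
              ((((r : ℤ) - ν + j).toNat.factorial : ℝ) *
                (((n : ℤ) - j).toNat.factorial : ℝ))) := by
  have hexp := congrArg (eval x) (X_pow_mul_iterate_A n m (H r n))
  simp only [twistedDeriv_eq_sum, iterate_derivative_H, ← H_add, eval_mul, eval_pow, eval_X,
    eval_neg, eval_one, eval_finsetSum, nsmul_eq_mul, eval_natCast, mul_sum] at hexp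
  refine mul_left_cancel₀ (pow_ne_zero (n + m) hx) (hexp.trans ?_)
  simp only [mul_sum]
  refine sum_congr rfl fun k hk => sum_congr rfl fun ν hν => sum_congr rfl fun j hj => ?_
  have hkm : k ≤ m := Nat.lt_succ_iff.mp (mem_range.mp hk)
  have hνk : ν ≤ k := Nat.lt_succ_iff.mp (mem_range.mp hν)
  have hjν : j ≤ ν := Nat.lt_succ_iff.mp (mem_range.mp hj)
  rw [show (r : ℤ) - ν + j = r - (ν - j : ℕ) by omega,
    show n + k - ν - 1 = n + (k - ν) - 1 by omega, alpha_eq_two_pow_mul_choose hjν,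
    Nat.cast_choose ℝ hkm, Nat.cast_choose ℝ hνk,
    show n + m = (n + k) + (m - k) by omega, pow_add, neg_pow x, eval_Hz_div_factorial,
    cast_factorial_add_sub_one hn]
  push_cast
  field_simp
end
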